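/- Let L be a maximal isotropic decomposable subspace of W with respect to an (n+1)-form ω, and f₁,...,fₙ ∈ W vectors such that i_{f₁∧...∧fₙ} ω does not annihilate L. Then there exist 1-forms f¹,...,fⁿ ∈ W* with fʲ(fᵢ) = δʲᵢ such that f¹ ∧ ... ∧ fⁿ lies in ω^♭(L) = {i_v ω : v ∈ L}. -/

import Mathlib

open Module Function

variable {K : Type*} [Field K] {W : Type*} [AddCommGroup W] [Module K W]

/-- The wedge product `α 0 ∧ ⋯ ∧ α (n-1)` of `n` linear forms, as an alternating `n`-form. -/
noncomputable def detForm (n : ℕ) (α : Fin n → Module.Dual K W) : W [⋀^Fin n]→ₗ[K] K :=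
  (Matrix.detRowAlternating (R := K) (n := Fin n)).compLinearMap (LinearMap.pi α)

lemma detForm_apply (n : ℕ) (α : Fin n → Module.Dual K W) (w : Fin n → W) :
    detForm n α w = Matrix.det (Matrix.of fun i j => α j (w i)) := rfl

lemma detForm_comb (n : ℕ) (α : Fin n → Module.Dual K W) (A : Matrix (Fin n) (Fin n) K) :
    detForm n (fun j => ∑ k, A k j • α k) = A.det • detForm n α := by
  ext w
  have : (Matrix.of fun i j => (∑ k, A k j • α k) (w i)) =
      (Matrix.of fun i k => α k (w i)) * A := by
    ext i j
    simp [Matrix.mul_apply, mul_comm]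
  simp only [detForm_apply, this, Matrix.det_mul, AlternatingMap.smul_apply, smul_eq_mul]
  ring

lemma alt_sum_apply {ι : Type*} {k : ℕ} (s : Finset ι) (φ : ι → (W [⋀^Fin k]→ₗ[K] K))
    (w : Fin k → W) : (∑ x ∈ s, φ x) w = ∑ x ∈ s, φ x w := by
  induction s using Finset.cons_induction with
  | empty => simp
  | cons a s ha ih => simp [Finset.sum_cons, ih]

/-- The kernel of an alternating form under interior contraction:
`v ∈ kerForm β ↔ i_v β = 0`. -/
def kerForm {n : ℕ} (β : W [⋀^Fin n]→ₗ[K] K) : Submodule K W where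
  carrier := {v | ∀ w : Fin n → W, (∃ i, w i = v) → β w = 0}
  zero_mem' := by
    rintro w ⟨i, hi⟩
    have h : w = Function.update w i (0 : W) := by rw [← hi, Function.update_eq_self]
    rw [h]
    simp
  add_mem' := by
    rintro a b ha hb w ⟨i, hi⟩
    have h : w = Function.update w i (a + b) := by rw [← hi, Function.update_eq_self]
    rw [h, β.map_update_add]
    rw [ha _ ⟨i, by simp⟩, hb _ ⟨i, by simp⟩, add_zero]
  smul_mem' := by
    rintro c a ha w ⟨i, hi⟩
    have h : w = Function.update w i (c • a) := by rw [← hi, Function.update_eq_self]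
    rw [h, β.map_update_smul, ha _ ⟨i, by simp⟩, smul_zero]

/-- The support of an alternating `n`-form `β`: the smallest subspace `S ⊆ W*` such that
`β ∈ Λⁿ S` (equivalently, `β` is a linear combination of wedges of elements of `S`). -/
noncomputable def supp {n : ℕ} (β : W [⋀^Fin n]→ₗ[K] K) : Submodule K (Module.Dual K W) :=
  sInf {S | β ∈ Submodule.span K
    {γ | ∃ α : Fin n → Module.Dual K W, (∀ i, α i ∈ S) ∧ γ = detForm n α}}

/-- `L` is `k`-isotropic w.r.t. `ω`: every contraction of `ω` with `k+1` vectors of `L`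
vanishes. -/
def kIsotropic {n : ℕ} (ω : W [⋀^Fin n]→ₗ[K] K) (k : ℕ) (L : Submodule K W) : Prop :=
  ∀ v : Fin n → W, (∀ i : Fin n, (i : ℕ) ≤ k → v i ∈ L) → ω v = 0

/-- `L` is maximal (1-)isotropic w.r.t. `ω`. -/
def MaximalIsotropic {n : ℕ} (ω : W [⋀^Fin n]→ₗ[K] K) (L : Submodule K W) : Prop :=
  kIsotropic ω 1 L ∧ ∀ L' : Submodule K W, kIsotropic ω 1 L' → L ≤ L' → L' = L

/-- `v` is a decomposable vector w.r.t. the `(n+1)`-form `ω`, i.e. `i_v ω` is a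
decomposable `n`-form. -/
def DecompVec {n : ℕ} (ω : W [⋀^Fin (n + 1)]→ₗ[K] K) (v : W) : Prop :=
  ∃ α : Fin n → Module.Dual K W, ω.curryLeft v = detForm n α

/-- `L` is decomposable w.r.t. `ω`: it has a basis of decomposable vectors. -/
def DecompSub {n : ℕ} (ω : W [⋀^Fin (n + 1)]→ₗ[K] K) (L : Submodule K W) : Prop :=
  ∃ (m : ℕ) (b : Fin m → W), (∀ i, b i ∈ L) ∧ LinearIndependent K b ∧
    Submodule.span K (Set.range b) = L ∧ ∀ i, DecompVec ω (b i)

/-- if `L` is maximal isotropic decomposable and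
`i_{f₁ ∧ ⋯ ∧ fₙ} ω` does not annihilate `L`, then there are `1`-forms `fʲ` dual to the
`fᵢ` with `f¹ ∧ ⋯ ∧ fⁿ ∈ ω^♭(L)`. -/
theorem stmt8 {n : ℕ} (ω : W [⋀^Fin (n + 1)]→ₗ[K] K) (L : Submodule K W)
    (hmax : MaximalIsotropic ω L) (hdec : DecompSub ω L) (f : Fin n → W)
    (hf : ∃ v ∈ L, ω.curryLeft v f ≠ 0) :
    ∃ g : Fin n → Module.Dual K W,
      (∀ i j, g j (f i) = if j = i then (1 : K) else 0) ∧
      ∃ v ∈ L, ω.curryLeft v = detForm n g := by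
  obtain ⟨m, b, hbL, _, hspan, hdecv⟩ := hdec
  obtain ⟨v, hvL, hv⟩ := hf
  rw [← hspan] at hvL
  obtain ⟨c, hc⟩ := (Finsupp.mem_span_range_iff_exists_finsupp).1 hvL
  have hsum : ω.curryLeft v f = ∑ i ∈ c.support, c i * ω.curryLeft (b i) f := by
    rw [← hc]
    rw [Finsupp.sum, map_sum]
    simp [alt_sum_apply, AlternatingMap.smul_apply]
  rw [hsum] at hv
  obtain ⟨i, _, hi⟩ := Finset.exists_ne_zero_of_sum_ne_zero hv
  have hbf : ω.curryLeft (b i) f ≠ 0 := fun h => hi (by simp [h])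
  obtain ⟨α, hα⟩ := hdecv i
  set M : Matrix (Fin n) (Fin n) K := Matrix.of fun i' j => α j (f i') with hM
  have hdet : M.det ≠ 0 := by
    have := hbf
    rwa [hα, detForm_apply] at this
  have hMinv : IsUnit M.det := (Ne.isUnit hdet)
  refine ⟨fun j => ∑ k, M⁻¹ k j • α k, ?_, (M.det)⁻¹ • b i, L.smul_mem _ (hbL i), ?_⟩
  · intro i' j
    have hmm : M * M⁻¹ = 1 := Matrix.mul_nonsing_inv M hMinv
    have : (M * M⁻¹) i' j = (1 : Matrix (Fin n) (Fin n) K) i' j := by rw [hmm]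
    simpa [Matrix.mul_apply, Matrix.one_apply, mul_comm, eq_comm, hM] using this
  · rw [detForm_comb n α M⁻¹, map_smul, hα, Matrix.det_nonsing_inv,
      Ring.inverse_eq_inv']
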